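/- arXiv:2104.09129 — 3 statements merged into one kernel-verified Lean document; each statement's English description precedes it below -/
import Mathlib

section
/- For every nonnegative integer α, all real numbers x, y, and every natural number n, ₍B₎E_{n+1}^(α)(x+1;y) − ₍B₎E_{n+1}^(α)(x;y) = Σ_{k=0}^{n} C(n+1,k) · ₍B₎E_k^(α)(x;y). -/
open PowerSeries Finset

/-- The series `e^{x t}`. -/
noncomputable def expXT (x : ℝ) : PowerSeries ℝ :=
  PowerSeries.rescale x (PowerSeries.exp ℝ)

/-- The series `e^{y (e^t - 1)} = ∑_{k ≥ 0} y^k (e^t - 1)^k / k!`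
(the inner sum is finite in each coefficient since `(e^t - 1)^k` has order `≥ k`). -/
noncomputable def bellSeries (y : ℝ) : PowerSeries ℝ :=
  PowerSeries.mk fun n =>
    ∑ k ∈ Finset.range (n + 1),
      y ^ k * ((k.factorial : ℝ))⁻¹ * PowerSeries.coeff n ((PowerSeries.exp ℝ - 1) ^ k)

/-- The series `(2 / (e^t + 1))^α`. -/
noncomputable def eulerSeries (α : ℕ) : PowerSeries ℝ :=
  (2 * (PowerSeries.exp ℝ + 1)⁻¹) ^ α

/-- The Bell-based Euler polynomial `₍B₎E_n^(α)(x; y)`: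
`n!` times the coefficient of `t^n` in `(2/(e^t+1))^α e^{xt + y(e^t-1)}`. -/
noncomputable def bellEuler (α : ℕ) (x y : ℝ) (n : ℕ) : ℝ :=
  n.factorial * PowerSeries.coeff n (eulerSeries α * expXT x * bellSeries y)

/- Since `e^{(x+1)t} = e^{xt} e^t`, the generating function at `x + 1` is the one at `x` times `e^t`,
so the difference of the two is the generating function at `x` times `e^t - 1`; multiplying an
exponential generating function by `e^t` is the binomial convolution with the all-ones sequence. -/

lemma expXT_add (x y : ℝ) : expXT (x + y) = expXT x * expXT y :=
  (exp_mul_exp_eq_exp_add x y).symm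

lemma expXT_one : expXT 1 = exp ℝ := by
  simp [expXT, rescale_one]

lemma factorial_mul_coeff_mul_exp {K : Type*} [Field K] [CharZero K] (G : K⟦X⟧) (n : ℕ) :
    (n.factorial : K) * coeff n (G * exp K) =
      ∑ k ∈ range (n + 1), (n.choose k : K) * (k.factorial * coeff k G) := by
  rw [coeff_mul, Nat.sum_antidiagonal_eq_sum_range_succ_mk, mul_sum]
  refine sum_congr rfl fun k hk => ?_
  have hkn : k ≤ n := Nat.lt_succ_iff.mp (mem_range.mp hk)
  have hfact : (n.choose k : K) * k.factorial * (n - k).factorial = n.factorial := by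
    exact_mod_cast Nat.choose_mul_factorial_mul_factorial hkn
  have hne : ((n - k).factorial : K) ≠ 0 := Nat.cast_ne_zero.mpr (Nat.factorial_ne_zero _)
  rw [coeff_exp, map_div₀, map_one, map_natCast, ← hfact]
  field_simp

lemma factorial_mul_coeff_mul_exp_sub_one {K : Type*} [Field K] [CharZero K] (G : K⟦X⟧)
    (n : ℕ) :
    ((n + 1).factorial : K) * coeff (n + 1) (G * (exp K - 1)) =
      ∑ k ∈ range (n + 1), ((n + 1).choose k : K) * (k.factorial * coeff k G) := by
  rw [mul_sub, mul_one, map_sub, mul_sub, factorial_mul_coeff_mul_exp, sum_range_succ,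
    Nat.choose_self, Nat.cast_one, one_mul, add_sub_cancel_right]

theorem stmt5 (α : ℕ) (x y : ℝ) (n : ℕ) :
    bellEuler α (x + 1) y (n + 1) - bellEuler α x y (n + 1) =
      ∑ k ∈ Finset.range (n + 1), ((n + 1).choose k : ℝ) * bellEuler α x y k := by
  set G := eulerSeries α * expXT x * bellSeries y
  have hshift : eulerSeries α * expXT (x + 1) * bellSeries y = G * exp ℝ := by
    rw [expXT_add, expXT_one]
    ring
  unfold bellEuler
  rw [hshift, ← mul_sub, ← map_sub, ← mul_sub_one]
  exact factorial_mul_coeff_mul_exp_sub_one G n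
end

section
/- For every nonnegative integer α, all real numbers x, y, and every natural number n, ₍B₎E_n^(α)(x;y) = Σ_{j=0}^{n} C(n,j) · ( Σ_{k=0}^{j} (x)_k · S₂(j,k) ) · ₍B₎E_{n−j}^(α)(y), where (x)_k = x(x−1)···(x−k+1) is the falling factorial (with (x)_0 = 1), S₂(j,k) are the Stirling numbers of the second kind, and ₍B₎E_m^(α)(y) := ₍B₎E_m^(α)(0;y). -/
/-!
Splitting off the factor `e^{xt}`, the coefficient of `t^n / n!` becomes a binomial convolution
of `x^j` with `₍B₎E_{n-j}^(α)(y)`, so it suffices that `x^j = ∑_k (x)_k S₂(j,k)`. This is the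
classical expansion of powers in falling factorials, valid for Mathlib's recursively defined
Stirling numbers; the generating-function `S₂` satisfies the same recurrence, because
differentiating `(e^t - 1)^{k+1}/(k+1)!` gives `(k+1) (e^t - 1)^{k+1}/(k+1)! + (e^t - 1)^k/k!`.
-/

open PowerSeries Finset

/-- The Stirling number of the second kind `S₂(n,k)`, with
`∑ S₂(n,k) t^n/n! = (e^t - 1)^k / k!`. -/
noncomputable def stirling2 (n k : ℕ) : ℝ :=
  n.factorial *
    PowerSeries.coeff n (((k.factorial : ℝ))⁻¹ • (PowerSeries.exp ℝ - 1) ^ k)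

open scoped Nat

namespace PowerSeries

variable {R : Type*} [CommSemiring R]

theorem factorial_mul_coeff_mul (f g : R⟦X⟧) (n : ℕ) :
    (n ! : R) * coeff n (f * g) = ∑ j ∈ range (n + 1),
      (n.choose j : R) * (j ! * coeff j f) * ((n - j)! * coeff (n - j) g) := by
  rw [coeff_mul, Nat.sum_antidiagonal_eq_sum_range_succ_mk, mul_sum]
  refine sum_congr rfl fun j hj => ?_
  rw [← Nat.choose_mul_factorial_mul_factorial (Nat.lt_succ_iff.mp (mem_range.mp hj))]
  push_cast
  ring

theorem factorial_mul_coeff_derivative (f : R⟦X⟧) (n : ℕ) :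
    (n ! : R) * coeff n (d⁄dX R f) = ((n + 1)! : R) * coeff (n + 1) f := by
  rw [coeff_derivative, Nat.factorial_succ]
  push_cast
  ring

end PowerSeries

open Nat Polynomial in
theorem sum_stirlingSecond_mul_descPochhammer (R : Type*) [Ring R] (n : ℕ) :
    ∑ k ∈ range (n + 1), (stirlingSecond n k : R[X]) * descPochhammer R k = Polynomial.X ^ n := by
  induction n with
  | zero => simp
  | succ n ih =>
    have hX (k : ℕ) : descPochhammer R k * Polynomial.X =
        descPochhammer R (k + 1) + (k : R[X]) * descPochhammer R k := by
      rw [descPochhammer_succ_right, mul_sub, (Nat.cast_commute k _).eq]; abel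
    have hshift : ∑ k ∈ range (n + 1),
        (((k + 1) * stirlingSecond n (k + 1) : ℕ) : R[X]) * descPochhammer R (k + 1) =
        ∑ k ∈ range (n + 1), ((k * stirlingSecond n k : ℕ) : R[X]) * descPochhammer R k := by
      have := sum_range_succ'
        (fun k => ((k * stirlingSecond n k : ℕ) : R[X]) * descPochhammer R k) (n + 1)
      rw [sum_range_succ, stirlingSecond_eq_zero_of_lt n.lt_succ_self] at this
      simpa using this.symm
    calc ∑ k ∈ range (n + 2), (stirlingSecond (n + 1) k : R[X]) * descPochhammer R k
        = ∑ k ∈ range (n + 1),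
            ((((k + 1) * stirlingSecond n (k + 1) : ℕ) : R[X]) * descPochhammer R (k + 1) +
              (stirlingSecond n k : R[X]) * descPochhammer R (k + 1)) := by
          rw [sum_range_succ', stirlingSecond_succ_zero, Nat.cast_zero, zero_mul, add_zero]
          exact sum_congr rfl fun k _ => by rw [stirlingSecond_succ_succ, Nat.cast_add, add_mul]
      _ = ∑ k ∈ range (n + 1), (stirlingSecond n k : R[X]) * descPochhammer R k * Polynomial.X := by
          rw [sum_add_distrib, hshift, ← sum_add_distrib]
          refine sum_congr rfl fun k _ => ?_
          rw [mul_assoc, hX, Nat.cast_mul, (Nat.cast_commute k _).eq]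
          noncomm_ring
      _ = Polynomial.X ^ (n + 1) := by rw [← sum_mul, ih, pow_succ]

theorem factorial_mul_coeff_expXT (x : ℝ) (n : ℕ) : (n ! : ℝ) * coeff n (expXT x) = x ^ n := by
  simp only [expXT, coeff_rescale, coeff_exp, one_div, map_inv₀, map_natCast]
  field_simp

theorem expXT_zero : expXT 0 = 1 := by
  simp [expXT, rescale_zero]

theorem derivative_expSubOne_pow_div_factorial (k : ℕ) :
    d⁄dX ℝ (((k + 1)! : ℝ)⁻¹ • (exp ℝ - 1) ^ (k + 1)) =
      (k + 1 : ℝ) • (((k + 1)! : ℝ)⁻¹ • (exp ℝ - 1) ^ (k + 1)) +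
        (k ! : ℝ)⁻¹ • (exp ℝ - 1) ^ k := by
  rw [Derivation.map_smul, Derivation.leibniz_pow, map_sub, derivative_exp,
    Derivation.map_one_eq_zero, sub_zero, Nat.add_sub_cancel, smul_eq_mul,
    show (exp ℝ - 1) ^ k * exp ℝ = (exp ℝ - 1) ^ (k + 1) + (exp ℝ - 1) ^ k by ring]
  have hc : ((k + 1)! : ℝ)⁻¹ * (k + 1) = (k ! : ℝ)⁻¹ := by
    rw [Nat.factorial_succ]; push_cast; field_simp
  match_scalars
  · ring
  · linear_combination hc

theorem stirling2_succ_succ (n k : ℕ) :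
    stirling2 (n + 1) (k + 1) = (k + 1) * stirling2 n (k + 1) + stirling2 n k := by
  rw [stirling2, ← factorial_mul_coeff_derivative, derivative_expSubOne_pow_div_factorial,
    map_add, map_smul, smul_eq_mul, stirling2, stirling2]
  ring

theorem stirling2_eq_stirlingSecond (n k : ℕ) : stirling2 n k = Nat.stirlingSecond n k := by
  induction n generalizing k with
  | zero =>
    cases k <;> simp [stirling2]
  | succ n ih =>
    cases k with
    | zero => simp [stirling2]
    | succ k => rw [stirling2_succ_succ, ih, ih, Nat.stirlingSecond_succ_succ]; push_cast; ring

theorem sum_descPochhammer_eval_mul_stirling2 (n : ℕ) (x : ℝ) :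
    ∑ k ∈ range (n + 1), (descPochhammer ℝ k).eval x * stirling2 n k = x ^ n := by
  simpa [stirling2_eq_stirlingSecond, mul_comm, Polynomial.eval_finsetSum] using
    congrArg (Polynomial.eval x) (sum_stirlingSecond_mul_descPochhammer ℝ n)

theorem stmt7 (α : ℕ) (x y : ℝ) (n : ℕ) :
    bellEuler α x y n =
      ∑ j ∈ Finset.range (n + 1),
        (n.choose j : ℝ) *
          (∑ k ∈ Finset.range (j + 1), (descPochhammer ℝ k).eval x * stirling2 j k) *
          bellEuler α 0 y (n - j) := by
  have hzero (m : ℕ) : bellEuler α 0 y m = m ! * coeff m (eulerSeries α * bellSeries y) := by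
    rw [bellEuler, expXT_zero, mul_one]
  rw [bellEuler, mul_right_comm, mul_comm _ (expXT x), factorial_mul_coeff_mul]
  simp only [factorial_mul_coeff_expXT, sum_descPochhammer_eval_mul_stirling2, hzero]
end

section
/- Fix an integer μ ≥ 1, a real number y, and a natural number n. For every real polynomial q(x) of degree at most n, q(x) = Σ_{k=0}^{n} b_k^{(μ)} · ₍B₎E_k^(μ)(x;y) for all x, where b_k^{(μ)} = (1/(2^μ k!)) · ⟨ (e^t+1)^μ · e^{−y(e^t−1)} · t^k | q(x) ⟩ and ⟨·|·⟩ is the umbral pairing. -/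
open PowerSeries Finset

/-- The umbral pairing `⟨g(t) | q(x)⟩ = ∑_m q_m · m! · (coeff of t^m in g)`. -/
noncomputable def umbral (g : PowerSeries ℝ) (q : Polynomial ℝ) : ℝ :=
  ∑ m ∈ Finset.range (q.natDegree + 1),
    q.coeff m * m.factorial * PowerSeries.coeff m g

/-! Let `G = (2/(e^t+1))^μ e^{xt} e^{y(e^t-1)}`, the generating function of the `₍B₎E_k^(μ)(x;y)`,
and `H = (e^t+1)^μ e^{-y(e^t-1)}`. Since `e^{y(e^t-1)}` is `e^{yt}` with `e^t - 1` substituted for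
`t`, and substitution is a ring homomorphism, `e^{y(e^t-1)} e^{-y(e^t-1)} = 1`; hence
`G H = 2^μ e^{xt}`. The pairing `⟨H t^k | q⟩` only sees coefficients of `H` of order at most
`deg q - k`, so summing `⟨H t^k | q⟩ [t^k] G` over `k ≤ n` gives
`⟨G H | q⟩ = 2^μ ⟨e^{xt} | q⟩ = 2^μ q(x)`. -/

lemma coeff_exp_sub_one_pow_eq_zero {A : Type*} [CommRing A] [Algebra ℚ A] {n k : ℕ} (h : n < k) :
    coeff n ((exp A - 1) ^ k) = 0 := by
  have hX : (X : A⟦X⟧) ∣ exp A - 1 := X_dvd_iff.2 (by simp)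
  exact X_pow_dvd_iff.1 (pow_dvd_pow_of_dvd hX k) n h

lemma hasSubst_exp_sub_one {A : Type*} [CommRing A] [Algebra ℚ A] : HasSubst (exp A - 1) :=
  HasSubst.of_constantCoeff_zero' (by simp)

lemma bellSeries_eq_subst (y : ℝ) :
    bellSeries y = (rescale y (exp ℝ)).subst (exp ℝ - 1) := by
  ext n
  rw [coeff_subst' hasSubst_exp_sub_one, finsum_eq_sum_of_support_subset (s := range (n + 1)),
    bellSeries, coeff_mk]
  · refine sum_congr rfl fun k _ => ?_
    simp [coeff_rescale, coeff_exp, mul_assoc]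
  · intro k hk
    simp only [Function.mem_support, coe_range, Set.mem_Iio] at hk ⊢
    by_contra! h
    exact hk (by rw [coeff_exp_sub_one_pow_eq_zero (by omega), smul_zero])

lemma bellSeries_add (y y' : ℝ) : bellSeries (y + y') = bellSeries y * bellSeries y' := by
  simp only [bellSeries_eq_subst, ← exp_mul_exp_eq_exp_add, subst_mul hasSubst_exp_sub_one]

lemma bellSeries_zero : bellSeries 0 = 1 := by
  rw [bellSeries_eq_subst, rescale_zero, RingHom.comp_apply, constantCoeff_exp, map_one,
    ← coe_substAlgHom hasSubst_exp_sub_one, map_one]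

lemma bellSeries_mul_bellSeries_neg (y : ℝ) : bellSeries y * bellSeries (-y) = 1 := by
  rw [← bellSeries_add, add_neg_cancel, bellSeries_zero]

lemma eulerSeries_mul_exp_add_one_pow (μ : ℕ) : eulerSeries μ * (exp ℝ + 1) ^ μ = 2 ^ μ := by
  have h : (exp ℝ + 1)⁻¹ * (exp ℝ + 1) = 1 := PowerSeries.inv_mul_cancel _ (by simp)
  rw [eulerSeries, ← mul_pow, mul_assoc, h, mul_one]

lemma sum_coeff_mul_X_pow_mul_coeff {R : Type*} [CommSemiring R] (f g : R⟦X⟧) {m n : ℕ}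
    (hmn : m ≤ n) :
    ∑ k ∈ range (n + 1), coeff m (g * X ^ k) * coeff k f = coeff m (f * g) := by
  simp only [coeff_mul_X_pow', ite_mul, zero_mul]
  rw [← sum_filter, coeff_mul, Nat.sum_antidiagonal_eq_sum_range_succ_mk]
  have hrange : {k ∈ range (n + 1) | k ≤ m} = range (m + 1) := by
    ext k
    simp only [mem_filter, mem_range]
    omega
  rw [hrange]
  exact sum_congr rfl fun _ _ => mul_comm _ _

lemma umbral_C_mul (c : ℝ) (g : ℝ⟦X⟧) (q : Polynomial ℝ) :
    umbral (C c * g) q = c * umbral g q := by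
  simp only [umbral, coeff_C_mul, mul_sum]
  exact sum_congr rfl fun _ _ => by ring

lemma umbral_expXT (x : ℝ) (q : Polynomial ℝ) : umbral (expXT x) q = q.eval x := by
  rw [umbral, Polynomial.eval_eq_sum_range]
  refine sum_congr rfl fun m _ => ?_
  rw [expXT, coeff_rescale, coeff_exp, map_div₀, map_one, map_natCast]
  field_simp

lemma sum_umbral_mul_X_pow_mul_coeff (f g : ℝ⟦X⟧) {q : Polynomial ℝ} {n : ℕ}
    (hq : q.natDegree ≤ n) :
    ∑ k ∈ range (n + 1), umbral (g * X ^ k) q * coeff k f = umbral (f * g) q := by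
  simp only [umbral, sum_mul]
  rw [sum_comm]
  refine sum_congr rfl fun m hm => ?_
  rw [← sum_coeff_mul_X_pow_mul_coeff f g ((mem_range_succ_iff.1 hm).trans hq), mul_sum]
  exact sum_congr rfl fun _ _ => by ring

theorem stmt14_general (μ : ℕ) (y : ℝ) (n : ℕ) (q : Polynomial ℝ)
    (hq : q.natDegree ≤ n) (x : ℝ) :
    q.eval x =
      ∑ k ∈ Finset.range (n + 1),
        ((2 ^ μ * k.factorial : ℝ))⁻¹ *
          umbral ((PowerSeries.exp ℝ + 1) ^ μ * bellSeries (-y) * PowerSeries.X ^ k) q *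
          bellEuler μ x y k := by
  set G := eulerSeries μ * expXT x * bellSeries y with hG
  set H := (exp ℝ + 1) ^ μ * bellSeries (-y)
  have hGH : C ((2 : ℝ) ^ μ)⁻¹ * (G * H) = expXT x := by
    calc C ((2 : ℝ) ^ μ)⁻¹ * (G * H)
        = C ((2 : ℝ) ^ μ)⁻¹ * (eulerSeries μ * (exp ℝ + 1) ^ μ) *
            (bellSeries y * bellSeries (-y)) * expXT x := by ring
      _ = expXT x := by
        rw [eulerSeries_mul_exp_add_one_pow, bellSeries_mul_bellSeries_neg, ← map_ofNat C,
          ← map_pow, ← map_mul, inv_mul_cancel₀ (by positivity), map_one, one_mul, one_mul]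
  have hterm : ∀ k, ((2 ^ μ * k.factorial : ℝ))⁻¹ * umbral (H * X ^ k) q * bellEuler μ x y k =
      ((2 : ℝ) ^ μ)⁻¹ * (umbral (H * X ^ k) q * coeff k G) := fun k => by
    rw [bellEuler, ← hG]
    field_simp
  rw [sum_congr rfl fun k _ => hterm k, ← mul_sum, sum_umbral_mul_X_pow_mul_coeff G H hq,
    ← umbral_C_mul, hGH, umbral_expXT]

theorem stmt14 (μ : ℕ) (hμ : 1 ≤ μ) (y : ℝ) (n : ℕ) (q : Polynomial ℝ)
    (hq : q.natDegree ≤ n) (x : ℝ) :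
    q.eval x =
      ∑ k ∈ Finset.range (n + 1),
        ((2 ^ μ * k.factorial : ℝ))⁻¹ *
          umbral ((PowerSeries.exp ℝ + 1) ^ μ * bellSeries (-y) * PowerSeries.X ^ k) q *
          bellEuler μ x y k :=
  stmt14_general μ y n q hq x
end
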